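/- arXiv:1004.0211 — 11 statements merged into one kernel-verified Lean document; each statement's English description precedes it below -/
import Mathlib

section
/- Let X be a zero-dimensional metrizable space in which every open set is a countable union of clopen sets, and let G ⊆ X be a G_δ set. Then there exists a sequence (U_n) of open subsets of X that is a point-cofinite cover of X (i.e., every point of X lies in all but finitely many U_n) such that G = ⋂_n U_n. -/
/-!
Write `G = ⋂ n, V n` with `V n` open and let `W n = ⋂ i < n, V i`. A point outside `G` leaves the
sets `V n ∪ (W n)ᶜ` at exactly one index, the first `n` with `x ∉ V n`, and their intersection is
still `G`. These sets need not be open, but `W n` is a disjoint union of clopen sets `D n k`, and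
`V n ∪ (W n)ᶜ = ⋂ k, V n ∪ (D n k)ᶜ` is an intersection of open sets, of which each point leaves
at most one by disjointness. Enumerating the pairs `(n, k)` gives the cover.
-/

open Filter Function Set

theorem IsClopen.disjointed {X : Type*} [TopologicalSpace X] {C : ℕ → Set X}
    (hC : ∀ n, IsClopen (C n)) (n : ℕ) : IsClopen (disjointed C n) :=
  disjointedRec (fun _ i ht => ht.diff (hC i)) (hC n)

section FirstExit

variable {α : Type*} (V : ℕ → Set α)

theorem iInter_union_compl_biInter_lt : ⋂ n, (V n ∪ (⋂ i < n, V i)ᶜ) = ⋂ n, V n := by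
  refine Subset.antisymm (fun x hx => ?_) (iInter_mono fun n => subset_union_left)
  rw [mem_iInter] at hx ⊢
  intro n
  induction n using Nat.strong_induction_on with
  | _ n ih => exact (hx n).resolve_right (not_not.2 (mem_iInter₂.2 ih))

theorem subsingleton_setOf_notMem_union_compl_biInter_lt (x : α) :
    {n | x ∉ V n ∪ (⋂ i < n, V i)ᶜ}.Subsingleton := by
  intro m hm n hn
  simp only [mem_ofPred_eq, mem_union, mem_compl_iff, not_or, not_not, mem_iInter] at hm hn
  by_contra hne
  rcases lt_or_gt_of_ne hne with h | h
  · exact hm.1 (hn.2 m h)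
  · exact hn.1 (hm.2 n h)

end FirstExit

section Refinement

variable {α ι : Type*} {V : ℕ → Set α} {D : ℕ → ι → Set α}

theorem iInter_prod_union_compl_eq (hD : ∀ n, ⋂ i < n, V i = ⋃ k, D n k) :
    ⋂ p : ℕ × ι, (V p.1 ∪ (D p.1 p.2)ᶜ) = ⋂ n, V n := by
  calc ⋂ p : ℕ × ι, (V p.1 ∪ (D p.1 p.2)ᶜ) = ⋂ (n) (k), (V n ∪ (D n k)ᶜ) := iInf_prod
    _ = ⋂ n, (V n ∪ (⋂ i < n, V i)ᶜ) := by simp only [← union_iInter, ← compl_iUnion, hD]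
    _ = ⋂ n, V n := iInter_union_compl_biInter_lt V

theorem subsingleton_setOf_notMem_union_compl (hD : ∀ n, ⋂ i < n, V i = ⋃ k, D n k)
    (hdisj : ∀ n, Pairwise (Disjoint on D n)) (x : α) :
    {p : ℕ × ι | x ∉ V p.1 ∪ (D p.1 p.2)ᶜ}.Subsingleton := by
  have hexit : ∀ p ∈ {p : ℕ × ι | x ∉ V p.1 ∪ (D p.1 p.2)ᶜ},
      p.1 ∈ {n | x ∉ V n ∪ (⋂ i < n, V i)ᶜ} ∧ x ∈ D p.1 p.2 := by
    rintro ⟨n, k⟩ hp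
    simp only [mem_ofPred_eq, mem_union, mem_compl_iff, not_or, not_not, hD n, mem_iUnion] at hp ⊢
    exact ⟨⟨hp.1, k, hp.2⟩, hp.2⟩
  rintro ⟨m, k⟩ hp ⟨n, l⟩ hq
  obtain ⟨hm, hk⟩ := hexit _ hp
  obtain ⟨hn, hl⟩ := hexit _ hq
  obtain rfl : m = n := subsingleton_setOf_notMem_union_compl_biInter_lt V x hm hn
  obtain rfl : k = l := subsingleton_setOfPred_mem_iff_pairwise_disjoint.2 (hdisj m) x hk hl
  rfl

end Refinement

theorem gdelta_eq_inter_of_point_cofinite_cover_general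
    {X : Type*} [TopologicalSpace X]
    (hclopen : ∀ U : Set X, IsOpen U →
      ∃ C : ℕ → Set X, (∀ n, IsClopen (C n)) ∧ U = ⋃ n, C n)
    (G : Set X) (hG : IsGδ G) :
    ∃ U : ℕ → Set X, (∀ n, IsOpen (U n)) ∧
      (∀ x : X, ∀ᶠ n in atTop, x ∈ U n) ∧ G = ⋂ n, U n := by
  obtain ⟨V, hVopen, rfl⟩ := hG.eq_iInter_nat
  have hW : ∀ n, IsOpen (⋂ i < n, V i) := fun n =>
    (finite_lt_nat n).isOpen_biInter fun i _ => hVopen i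
  choose C hC hCU using fun n => hclopen _ (hW n)
  let D n := disjointed (C n)
  have hDU : ∀ n, ⋂ i < n, V i = ⋃ k, D n k := fun n => (hCU n).trans iUnion_disjointed.symm
  have hdisj : ∀ n, Pairwise (Disjoint on D n) := fun n => disjoint_disjointed (C n)
  let F : ℕ × ℕ → Set X := fun p => V p.1 ∪ (D p.1 p.2)ᶜ
  refine ⟨fun m => F (Nat.pairEquiv.symm m),
    fun m => (hVopen _).union (IsClopen.disjointed (hC _) _).compl.isOpen, fun x => ?_, ?_⟩
  · rw [← Nat.cofinite_eq_atTop, eventually_cofinite]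
    exact (subsingleton_setOf_notMem_union_compl hDU hdisj x).finite.preimage
      Nat.pairEquiv.symm.injective.injOn
  · rw [Nat.pairEquiv.symm.surjective.iInter_comp, iInter_prod_union_compl_eq hDU]

/-- In a zero-dimensional metrizable space in which every open set is a
countable union of clopen sets, every `G_δ` set is the intersection of an
open point-cofinite cover of the space. -/
theorem gdelta_eq_inter_of_point_cofinite_cover
    {X : Type*} [TopologicalSpace X] [TopologicalSpace.MetrizableSpace X]
    (hclopen : ∀ U : Set X, IsOpen U →
      ∃ C : ℕ → Set X, (∀ n, IsClopen (C n)) ∧ U = ⋃ n, C n)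
    (G : Set X) (hG : IsGδ G) :
    ∃ U : ℕ → Set X, (∀ n, IsOpen (U n)) ∧
      (∀ x : X, ∀ᶠ n in atTop, x ∈ U n) ∧ G = ⋂ n, U n :=
  gdelta_eq_inter_of_point_cofinite_cover_general hclopen G hG
end

section
/- Let X be a topological space, Y a metric space, and suppose Ψ : X → Y is a quasi-normal limit of continuous functions Ψ_n : X → Y; that is, there exist positive reals ε_n → 0 such that for every x ∈ X, d(Ψ_n(x), Ψ(x)) < ε_n for all but finitely many n. Then X can be written as a countable increasing union of closed sets X_k such that the restriction of Ψ to each X_k is continuous (indeed, Ψ_n → Ψ uniformly on each X_k). -/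
open Filter Topology

/-!
On `X_k`, the set where `d(Ψ_n x, Ψ_m x) ≤ ε_n + ε_m` for all `n, m ≥ k`, letting `m → ∞`
gives `d(Ψ_n x, Ψ x) ≤ ε_n` for every `n ≥ k`, a bound independent of `x`; hence the convergence
is uniform on `X_k` and `Ψ` is continuous there. Each `X_k` is an intersection of closed sets
because the `Ψ_n` are continuous, and the quasi-normal bound at `x` (via the triangle inequality
through `Ψ x`) puts `x` in some `X_k`.
-/

namespace QuasiNormal

variable {X Y : Type*} [PseudoMetricSpace Y]

/-- The set `X_k` of the paper. -/
def stratum (F : ℕ → X → Y) (ε : ℕ → ℝ) (k : ℕ) : Set X :=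
  {x | ∀ n ≥ k, ∀ m ≥ k, dist (F n x) (F m x) ≤ ε n + ε m}

theorem stratum_mono (F : ℕ → X → Y) (ε : ℕ → ℝ) : Monotone (stratum F ε) :=
  fun _ _ hkl _ hx n hn m hm => hx n (hkl.trans hn) m (hkl.trans hm)

theorem isClosed_stratum [TopologicalSpace X] {F : ℕ → X → Y} (hF : ∀ n, Continuous (F n))
    (ε : ℕ → ℝ) (k : ℕ) : IsClosed (stratum F ε k) := by
  have hstratum : stratum F ε k = ⋂ n ≥ k, ⋂ m ≥ k, {x | dist (F n x) (F m x) ≤ ε n + ε m} := by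
    ext x
    simp [stratum]
  rw [hstratum]
  exact isClosed_biInter fun n _ => isClosed_biInter fun m _ =>
    isClosed_le ((hF n).dist (hF m)) continuous_const

theorem iUnion_stratum_eq_univ {F : ℕ → X → Y} {f : X → Y} {ε : ℕ → ℝ}
    (h : ∀ x, ∀ᶠ n in atTop, dist (F n x) (f x) < ε n) : ⋃ k, stratum F ε k = Set.univ := by
  refine Set.iUnion_eq_univ_iff.2 fun x => ?_
  obtain ⟨k, hk⟩ := (h x).exists_forall_of_atTop
  refine ⟨k, fun n hn m hm => ?_⟩
  calc dist (F n x) (F m x) ≤ dist (F n x) (f x) + dist (F m x) (f x) := dist_triangle_right _ _ _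
    _ ≤ ε n + ε m := add_le_add (hk n hn).le (hk m hm).le

theorem tendsto_of_eventually_dist_lt {u : ℕ → Y} {y : Y} {ε : ℕ → ℝ}
    (hε : Tendsto ε atTop (𝓝 0)) (h : ∀ᶠ n in atTop, dist (u n) y < ε n) :
    Tendsto u atTop (𝓝 y) :=
  tendsto_iff_dist_tendsto_zero.2 <|
    squeeze_zero' (Eventually.of_forall fun _ => dist_nonneg) (h.mono fun _ hn => hn.le) hε

theorem dist_le_of_mem_stratum {F : ℕ → X → Y} {ε : ℕ → ℝ} {k n : ℕ} {x : X} {y : Y}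
    (hε : Tendsto ε atTop (𝓝 0)) (hlim : Tendsto (fun m => F m x) atTop (𝓝 y))
    (hx : x ∈ stratum F ε k) (hn : k ≤ n) : dist (F n x) y ≤ ε n := by
  have hbound : Tendsto (fun m => ε n + ε m) atTop (𝓝 (ε n)) := by
    simpa using tendsto_const_nhds.add hε
  exact le_of_tendsto_of_tendsto (tendsto_const_nhds.dist hlim) hbound <|
    (eventually_ge_atTop k).mono fun m hm => hx n hn m hm

theorem tendstoUniformlyOn_stratum {F : ℕ → X → Y} {f : X → Y} {ε : ℕ → ℝ}
    (hε : Tendsto ε atTop (𝓝 0)) (hlim : ∀ x, Tendsto (fun n => F n x) atTop (𝓝 (f x)))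
    (k : ℕ) : TendstoUniformlyOn F f atTop (stratum F ε k) := by
  refine Metric.tendstoUniformlyOn_iff.2 fun δ hδ => ?_
  filter_upwards [hε.eventually (gt_mem_nhds hδ), eventually_ge_atTop k] with n hεn hkn x hx
  rw [dist_comm]
  exact (dist_le_of_mem_stratum hε (hlim x) hx hkn).trans_lt hεn

end QuasiNormal

open QuasiNormal

theorem quasinormal_limit_closed_decomposition_general
    {X Y : Type*} [TopologicalSpace X] [MetricSpace Y]
    (Ψ : X → Y) (Ψn : ℕ → X → Y) (hc : ∀ n, Continuous (Ψn n))
    (ε : ℕ → ℝ)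
    (hε0 : Tendsto ε atTop (nhds 0))
    (hqn : ∀ x : X, ∀ᶠ n in atTop, dist (Ψn n x) (Ψ x) < ε n) :
    ∃ Xk : ℕ → Set X, (∀ k, IsClosed (Xk k)) ∧ (∀ k, Xk k ⊆ Xk (k + 1)) ∧
      (⋃ k, Xk k) = Set.univ ∧
      (∀ k, ContinuousOn Ψ (Xk k)) ∧
      (∀ k, TendstoUniformlyOn Ψn Ψ atTop (Xk k)) := by
  have hunif : ∀ k, TendstoUniformlyOn Ψn Ψ atTop (stratum Ψn ε k) :=
    tendstoUniformlyOn_stratum hε0 fun x => tendsto_of_eventually_dist_lt hε0 (hqn x)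
  refine ⟨stratum Ψn ε, isClosed_stratum hc ε, fun k => stratum_mono Ψn ε k.le_succ,
    iUnion_stratum_eq_univ hqn, fun k => ?_, hunif⟩
  exact (hunif k).continuousOn (Frequently.of_forall fun n => (hc n).continuousOn)

/-- If `Ψ : X → Y` (`Y` metric) is a quasi-normal limit of continuous
functions `Ψ n`, then `X` is a countable increasing union of closed sets on
each of which `Ψ n → Ψ` uniformly; in particular `Ψ` is continuous on each of
these closed sets. -/
theorem quasinormal_limit_closed_decomposition
    {X Y : Type*} [TopologicalSpace X] [MetricSpace Y]
    (Ψ : X → Y) (Ψn : ℕ → X → Y) (hc : ∀ n, Continuous (Ψn n))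
    (ε : ℕ → ℝ) (hεpos : ∀ n, 0 < ε n)
    (hε0 : Tendsto ε atTop (nhds 0))
    (hqn : ∀ x : X, ∀ᶠ n in atTop, dist (Ψn n x) (Ψ x) < ε n) :
    ∃ Xk : ℕ → Set X, (∀ k, IsClosed (Xk k)) ∧ (∀ k, Xk k ⊆ Xk (k + 1)) ∧
      (⋃ k, Xk k) = Set.univ ∧
      (∀ k, ContinuousOn Ψ (Xk k)) ∧
      (∀ k, TendstoUniformlyOn Ψn Ψ atTop (Xk k)) :=
  quasinormal_limit_closed_decomposition_general Ψ Ψn hc ε hε0 hqn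
end

section
/- Suppose P is a property of topological spaces preserved under closed subspaces, continuous images, and countable unions of subspaces. If X has property P, Y is a metric space, and Ψ : X → Y is a quasi-normal limit of continuous functions X → Y, then Ψ[X] has property P. -/
/-!
The sets `S m` of points `x` with `d(Ψₙ x, Ψₖ x) ≤ εₙ + εₖ` for all `n, k ≥ m` are closed and, by
quasi-normal convergence, cover `X`. Letting `k → ∞` gives `d(Ψₙ x, Ψ x) ≤ εₙ` on `S m` for
`n ≥ m`, so `Ψₙ → Ψ` uniformly on `S m` and `Ψ` is continuous there. Hence each `Ψ[S m]` is a
continuous image of a closed subspace of `X`, and `Ψ[X]` is their countable union.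
-/

open Filter Topology Set

universe u

section QuasiNormal

variable {X Y : Type*} [PseudoMetricSpace Y] {Ψn : ℕ → X → Y} {Ψ : X → Y} {ε : ℕ → ℝ}

variable (Ψn ε) in
def cauchyPiece (m : ℕ) : Set X :=
  {x | ∀ n ≥ m, ∀ k ≥ m, dist (Ψn n x) (Ψn k x) ≤ ε n + ε k}

theorem isClosed_cauchyPiece [TopologicalSpace X] (hc : ∀ n, Continuous (Ψn n)) (m : ℕ) :
    IsClosed (cauchyPiece Ψn ε m) := by
  simp only [cauchyPiece, ofPred_forall]
  exact isClosed_iInter fun n => isClosed_iInter fun _ => isClosed_iInter fun k =>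
    isClosed_iInter fun _ => isClosed_le ((hc n).dist (hc k)) continuous_const

theorem iUnion_cauchyPiece (hqn : ∀ x, ∀ᶠ n in atTop, dist (Ψn n x) (Ψ x) < ε n) :
    ⋃ m, cauchyPiece Ψn ε m = univ := by
  refine eq_univ_of_forall fun x => mem_iUnion.2 ?_
  obtain ⟨N, hN⟩ := eventually_atTop.1 (hqn x)
  refine ⟨N, fun n hn k hk => ?_⟩
  calc dist (Ψn n x) (Ψn k x) ≤ dist (Ψn n x) (Ψ x) + dist (Ψn k x) (Ψ x) :=
        dist_triangle_right _ _ _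
    _ ≤ ε n + ε k := add_le_add (hN n hn).le (hN k hk).le

theorem tendsto_of_eventually_dist_lt (hε0 : Tendsto ε atTop (𝓝 0)) {x : X}
    (hx : ∀ᶠ n in atTop, dist (Ψn n x) (Ψ x) < ε n) :
    Tendsto (fun n => Ψn n x) atTop (𝓝 (Ψ x)) :=
  tendsto_iff_dist_tendsto_zero.2 <|
    squeeze_zero' (Eventually.of_forall fun _ => dist_nonneg) (hx.mono fun _ h => h.le) hε0

theorem dist_le_of_mem_cauchyPiece (hε0 : Tendsto ε atTop (𝓝 0)) {x : X}
    (hx : Tendsto (fun n => Ψn n x) atTop (𝓝 (Ψ x))) {m : ℕ} (hxm : x ∈ cauchyPiece Ψn ε m)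
    {n : ℕ} (hn : m ≤ n) : dist (Ψn n x) (Ψ x) ≤ ε n := by
  have hlim : Tendsto (fun k => ε n + ε k) atTop (𝓝 (ε n)) := by
    simpa using tendsto_const_nhds.add hε0
  exact le_of_tendsto_of_tendsto (tendsto_const_nhds.dist hx) hlim
    (eventually_atTop.2 ⟨m, fun k hk => hxm n hn k hk⟩)

theorem tendstoUniformlyOn_cauchyPiece (hε0 : Tendsto ε atTop (𝓝 0))
    (hqn : ∀ x, ∀ᶠ n in atTop, dist (Ψn n x) (Ψ x) < ε n) (m : ℕ) :
    TendstoUniformlyOn Ψn Ψ atTop (cauchyPiece Ψn ε m) := by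
  rw [Metric.tendstoUniformlyOn_iff]
  intro δ hδ
  filter_upwards [hε0.eventually (gt_mem_nhds hδ), eventually_ge_atTop m] with n hεn hmn x hx
  rw [dist_comm]
  exact (dist_le_of_mem_cauchyPiece hε0 (tendsto_of_eventually_dist_lt hε0 (hqn x)) hx
    hmn).trans_lt hεn

theorem continuousOn_cauchyPiece [TopologicalSpace X] (hc : ∀ n, Continuous (Ψn n))
    (hε0 : Tendsto ε atTop (𝓝 0)) (hqn : ∀ x, ∀ᶠ n in atTop, dist (Ψn n x) (Ψ x) < ε n)
    (m : ℕ) : ContinuousOn Ψ (cauchyPiece Ψn ε m) :=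
  (tendstoUniformlyOn_cauchyPiece hε0 hqn m).continuousOn
    (Frequently.of_forall fun n => (hc n).continuousOn)

end QuasiNormal

theorem prop_range_of_continuousOn_countable_cover
    (P : (Z : Type u) → [TopologicalSpace Z] → Prop)
    (hImage : ∀ (Z W : Type u) [TopologicalSpace Z] [TopologicalSpace W]
      (f : Z → W), Continuous f → Function.Surjective f → P Z → P W)
    (hUnion : ∀ (Z : Type u) [TopologicalSpace Z] (A : ℕ → Set Z),
      (∀ n, P (A n)) → (⋃ n, A n) = univ → P Z)
    {X Y : Type u} [TopologicalSpace X] [TopologicalSpace Y] (f : X → Y) (S : ℕ → Set X)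
    (hS : ⋃ m, S m = univ) (hPS : ∀ m, P (S m)) (hf : ∀ m, ContinuousOn f (S m)) :
    P (range f) := by
  refine hUnion (range f) (fun m => Subtype.val ⁻¹' (f '' S m)) (fun m => ?_) ?_
  · refine hImage (S m) _ (fun x => ⟨⟨f x, x, rfl⟩, x, x.2, rfl⟩) ?_ ?_ (hPS m)
    · exact ((hf m).domRestrict.subtype_mk _).subtype_mk _
    · rintro ⟨⟨y, _⟩, x, hx, hxy : f x = y⟩
      subst hxy
      exact ⟨⟨x, hx⟩, rfl⟩
  · refine eq_univ_of_forall fun ⟨_, x, hx⟩ => ?_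
    obtain ⟨m, hm⟩ := mem_iUnion.1 (hS ▸ mem_univ x)
    exact mem_iUnion.2 ⟨m, x, hm, hx⟩

theorem property_preserved_by_quasinormal_limit_general
    (P : (Z : Type u) → [TopologicalSpace Z] → Prop)
    (hClosed : ∀ (Z : Type u) [TopologicalSpace Z] (A : Set Z),
      IsClosed A → P Z → P A)
    (hImage : ∀ (Z W : Type u) [TopologicalSpace Z] [TopologicalSpace W]
      (f : Z → W), Continuous f → Function.Surjective f → P Z → P W)
    (hUnion : ∀ (Z : Type u) [TopologicalSpace Z] (A : ℕ → Set Z),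
      (∀ n, P (A n)) → (⋃ n, A n) = Set.univ → P Z)
    (X Y : Type u) [TopologicalSpace X] [MetricSpace Y]
    (hX : P X)
    (Ψ : X → Y) (Ψn : ℕ → X → Y) (hc : ∀ n, Continuous (Ψn n))
    (ε : ℕ → ℝ) (hε0 : Tendsto ε atTop (nhds 0))
    (hqn : ∀ x : X, ∀ᶠ n in atTop, dist (Ψn n x) (Ψ x) < ε n) :
    P (Set.range Ψ) :=
  prop_range_of_continuousOn_countable_cover P hImage hUnion Ψ (cauchyPiece Ψn ε)
    (iUnion_cauchyPiece hqn) (fun m => hClosed X _ (isClosed_cauchyPiece hc m) hX)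
    (continuousOn_cauchyPiece hc hε0 hqn)

/-- If a property `P` of topological spaces is preserved by closed subspaces,
continuous images, and countable unions of subspaces, then `P` is preserved
by quasi-normal limits of continuous functions into metric spaces: if `X`
has `P` and `Ψ : X → Y` is a quasi-normal limit of continuous functions,
then the image `Ψ[X]` has `P`. -/
theorem property_preserved_by_quasinormal_limit
    (P : (Z : Type u) → [TopologicalSpace Z] → Prop)
    (hClosed : ∀ (Z : Type u) [TopologicalSpace Z] (A : Set Z),
      IsClosed A → P Z → P A)
    (hImage : ∀ (Z W : Type u) [TopologicalSpace Z] [TopologicalSpace W]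
      (f : Z → W), Continuous f → Function.Surjective f → P Z → P W)
    (hUnion : ∀ (Z : Type u) [TopologicalSpace Z] (A : ℕ → Set Z),
      (∀ n, P (A n)) → (⋃ n, A n) = Set.univ → P Z)
    (X Y : Type u) [TopologicalSpace X] [MetricSpace Y]
    (hX : P X)
    (Ψ : X → Y) (Ψn : ℕ → X → Y) (hc : ∀ n, Continuous (Ψn n))
    (ε : ℕ → ℝ) (hεpos : ∀ n, 0 < ε n) (hε0 : Tendsto ε atTop (nhds 0))
    (hqn : ∀ x : X, ∀ᶠ n in atTop, dist (Ψn n x) (Ψ x) < ε n) :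
    P (Set.range Ψ) :=
  property_preserved_by_quasinormal_limit_general P hClosed hImage hUnion X Y hX Ψ Ψn hc ε hε0 hqn
end

section
/- Let X be a topological space and (U_n) a point-cofinite cover of X by open sets, with each U_n = ⋃_m C^n_m a union of pairwise disjoint clopen sets C^n_m. Define Ψ : X → (ℕ ∪ {∞})^ℕ by Ψ(x)(n) = m if x ∈ C^n_m, and Ψ(x)(n) = ∞ if x ∉ U_n. Then Ψ is continuous, and Ψ(x) is eventually finite for every x ∈ X. -/
open OnePoint Filter Set

namespace OnePoint

variable {X α : Type*}

theorem preimage_image_coe_eq_biUnion (f : X → OnePoint α) (S : Set α) :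
    f ⁻¹' ((↑) '' S) = ⋃ a ∈ S, f ⁻¹' {(a : OnePoint α)} := by
  rw [← biUnion_preimage_singleton, biUnion_image]

theorem image_coe_preimage_coe_of_infty_notMem {s : Set (OnePoint α)} (h : ∞ ∉ s) :
    (↑) '' ((↑) ⁻¹' s : Set α) = s :=
  image_preimage_eq_iff.mpr fun _ hy => by_contra fun hy' => h (notMem_range_coe_iff.mp hy' ▸ hy)

/-- An open set containing `∞` has finite complement in `α`, so its preimage is the
complement of a finite union of closed fibres. -/
theorem continuous_of_isClopen_preimage_coe [TopologicalSpace X] [TopologicalSpace α]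
    [DiscreteTopology α] {f : X → OnePoint α}
    (hf : ∀ a : α, IsClopen (f ⁻¹' {(a : OnePoint α)})) : Continuous f := by
  refine continuous_def.mpr fun s hs => ?_
  by_cases h : ∞ ∈ s
  · have hcompl : ∞ ∉ sᶜ := fun h' => h' h
    obtain ⟨-, hcpt⟩ := (isOpen_iff_of_mem h).mp hs
    rw [← isClosed_compl_iff, ← preimage_compl, ← image_coe_preimage_coe_of_infty_notMem hcompl,
      preimage_image_coe_eq_biUnion, preimage_compl]
    exact hcpt.finite_of_discrete.isClosed_biUnion fun a _ => (hf a).isClosed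
  · rw [← image_coe_preimage_coe_of_infty_notMem h, preimage_image_coe_eq_biUnion]
    exact isOpen_biUnion fun a _ => (hf a).isOpen

theorem preimage_singleton_coe_eq {g : X → OnePoint α} {C : α → Set X}
    (hfin : ∀ a, ∀ x ∈ C a, g x = a) (hinf : ∀ x ∉ ⋃ a, C a, g x = ∞) (a : α) :
    g ⁻¹' {(a : OnePoint α)} = C a := by
  ext x
  refine ⟨fun hx => ?_, hfin a x⟩
  replace hx : g x = a := hx
  by_cases hU : x ∈ ⋃ b, C b
  · obtain ⟨b, hb⟩ := mem_iUnion.mp hU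
    obtain rfl : a = b := coe_injective (hx.symm.trans (hfin b x hb))
    exact hb
  · exact absurd (hx.symm.trans (hinf x hU)) (coe_ne_infty a)

end OnePoint

theorem marczewski_onepoint_map_continuous_general
    {X : Type*} [TopologicalSpace X]
    (U : ℕ → Set X)
    (hUcof : ∀ x : X, ∀ᶠ n in atTop, x ∈ U n)
    (C : ℕ → ℕ → Set X) (hCclopen : ∀ n m, IsClopen (C n m))
    (hCU : ∀ n, U n = ⋃ m, C n m)
    (Ψ : X → ℕ → OnePoint ℕ)
    (hΨfin : ∀ n m (x : X), x ∈ C n m → Ψ x n = (m : OnePoint ℕ))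
    (hΨinf : ∀ n (x : X), x ∉ U n → Ψ x n = ∞) :
    Continuous Ψ ∧ ∀ x : X, ∀ᶠ n in atTop, Ψ x n ≠ ∞ := by
  refine ⟨continuous_pi fun n => continuous_of_isClopen_preimage_coe fun m => ?_, fun x => ?_⟩
  · rw [preimage_singleton_coe_eq (hΨfin n) fun x hx => hΨinf n x (hCU n ▸ hx)]
    exact hCclopen n m
  · filter_upwards [hUcof x] with n hn
    obtain ⟨m, hm⟩ := mem_iUnion.mp (hCU n ▸ hn)
    rw [hΨfin n m x hm]
    exact coe_ne_infty m

/-- Given a point-cofinite open cover `(U n)` of `X`, with each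
`U n = ⋃ m, C n m` a union of pairwise disjoint clopen sets, the map
`Ψ : X → (ℕ ∪ {∞})^ℕ` with `Ψ x n = m` when `x ∈ C n m` and `Ψ x n = ∞`
when `x ∉ U n` is continuous, and `Ψ x` is eventually finite for each `x`. -/
theorem marczewski_onepoint_map_continuous
    {X : Type*} [TopologicalSpace X]
    (U : ℕ → Set X) (hUopen : ∀ n, IsOpen (U n))
    (hUcof : ∀ x : X, ∀ᶠ n in atTop, x ∈ U n)
    (C : ℕ → ℕ → Set X) (hCclopen : ∀ n m, IsClopen (C n m))
    (hCdisj : ∀ n, Pairwise (Function.onFun Disjoint (C n)))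
    (hCU : ∀ n, U n = ⋃ m, C n m)
    (Ψ : X → ℕ → OnePoint ℕ)
    (hΨfin : ∀ n m (x : X), x ∈ C n m → Ψ x n = (m : OnePoint ℕ))
    (hΨinf : ∀ n (x : X), x ∉ U n → Ψ x n = ∞) :
    Continuous Ψ ∧ ∀ x : X, ∀ᶠ n in atTop, Ψ x n ≠ ∞ :=
  marczewski_onepoint_map_continuous_general U hUcof C hCclopen hCU Ψ hΨfin hΨinf
end

section
/- Let X be a topological space such that every continuous image of X in ℕ^ℕ is ≤*-bounded, and suppose every G_δ subset of X (with the subspace topology) also has this property for its continuous images in ℕ^ℕ. If Ψ : X → EF ⊆ (ℕ ∪ {∞})^ℕ is continuous, then Ψ[X] is a bounded subset of EF. -/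
/-!
On the `G_δ` set `G_n` of points whose image is finite from coordinate `n` on, truncating the
first `n` coordinates to `0` turns `Ψ` into a continuous map into `ℕ^ℕ`, whose image is bounded
by some `g_n`. Every point lies in some `G_n`, and the diagonal `g k = max_{n ≤ k} g_n k`
eventually dominates each `g_n`.
-/

open OnePoint Filter

/-- `f ≤* g` for `f ∈ (ℕ ∪ {∞})^ℕ`, `g ∈ ℕ^ℕ`. -/
def EFLeStar (f : ℕ → OnePoint ℕ) (g : ℕ → ℕ) : Prop :=
  ∀ᶠ n in atTop, ∀ m : ℕ, f n = (m : OnePoint ℕ) → m ≤ g n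

section OnePoint

variable {Y α : Type*} [TopologicalSpace Y] [TopologicalSpace α]

theorem isOpen_setOf_ne_infty {f : Y → OnePoint α} (hf : Continuous f) :
    IsOpen {y | f y ≠ ∞} :=
  isClosed_infty.isOpen_compl.preimage hf

theorem isGδ_setOf_forall_ge_ne_infty {Ψ : Y → ℕ → OnePoint α} (hΨ : Continuous Ψ) (n : ℕ) :
    IsGδ {y | ∀ m ≥ n, Ψ y m ≠ ∞} := by
  have hG : {y | ∀ m ≥ n, Ψ y m ≠ ∞} = ⋂ m ∈ Set.Ici n, {y | Ψ y m ≠ ∞} := by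
    ext y
    simp
  rw [hG]
  exact IsGδ.biInter_of_isOpen (Set.to_countable _) fun m _ =>
    isOpen_setOf_ne_infty ((continuous_apply m).comp hΨ)

theorem continuous_getD_of_ne_infty {f : Y → OnePoint α} (hf : Continuous f)
    (hfin : ∀ y, f y ≠ ∞) (d : α) : Continuous fun y => (f y).getD d := by
  rw [isOpenEmbedding_coe.isInducing.continuous_iff]
  convert hf using 1
  funext y
  obtain ⟨a, ha⟩ := ne_infty_iff_exists.1 (hfin y)
  simp only [Function.comp_apply, ← ha]
  rfl

theorem continuous_truncate_getD {Ψ : Y → ℕ → OnePoint α} (hΨ : Continuous Ψ) (n : ℕ) (d : α) :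
    Continuous fun (y : {x | ∀ m ≥ n, Ψ x m ≠ ∞}) (m : ℕ) =>
      if n ≤ m then (Ψ y m).getD d else d := by
  refine continuous_pi fun m => ?_
  by_cases hnm : n ≤ m
  · have hfin : ∀ y : {x | ∀ m ≥ n, Ψ x m ≠ ∞}, Ψ y m ≠ ∞ := fun y => y.2 m hnm
    simp only [hnm, if_true]
    exact continuous_getD_of_ne_infty (by fun_prop) hfin d
  · simp only [hnm, if_false]
    exact continuous_const

end OnePoint

theorem exists_forall_le_of_le_index (gs : ℕ → ℕ → ℕ) :
    ∃ g : ℕ → ℕ, ∀ n k, n ≤ k → gs n k ≤ g k :=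
  ⟨fun k => (Finset.range (k + 1)).sup fun i => gs i k, fun _ k hnk =>
    Finset.le_sup (f := fun i => gs i k) (Finset.mem_range.2 (Nat.lt_succ_of_le hnk))⟩

theorem EFLeStar_of_eventually_getD_le {f : ℕ → OnePoint ℕ} {g : ℕ → ℕ}
    (h : ∀ᶠ n in atTop, (f n).getD 0 ≤ g n) : EFLeStar f g := by
  filter_upwards [h] with n hn m hm
  rw [hm] at hn
  exact hn

theorem continuous_EF_image_bounded_general
    {X : Type*} [TopologicalSpace X]
    (hGδ : ∀ G : Set X, IsGδ G → ∀ Φ : G → ℕ → ℕ, Continuous Φ →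
      ∃ g : ℕ → ℕ, ∀ y : G, ∀ᶠ n in atTop, Φ y n ≤ g n)
    (Ψ : X → ℕ → OnePoint ℕ) (hΨ : Continuous Ψ)
    (hEF : ∀ x : X, ∀ᶠ n in atTop, Ψ x n ≠ ∞) :
    ∃ g : ℕ → ℕ, ∀ x : X, EFLeStar (Ψ x) g := by
  choose gs hgs using fun n =>
    hGδ _ (isGδ_setOf_forall_ge_ne_infty hΨ n) _ (continuous_truncate_getD hΨ n 0)
  obtain ⟨g, hg⟩ := exists_forall_le_of_le_index gs
  refine ⟨g, fun x => EFLeStar_of_eventually_getD_le ?_⟩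
  obtain ⟨n, hn⟩ := eventually_atTop.1 (hEF x)
  filter_upwards [hgs n ⟨x, hn⟩, eventually_ge_atTop n] with k hk hnk
  simp only [hnk, if_true] at hk
  exact hk.trans (hg n k hnk)

/-- If every continuous image of `X` in `ℕ^ℕ` is `≤*`-bounded, and the same
holds for every `G_δ` subspace of `X`, then every continuous image of `X`
in the space `EF` of eventually finite elements of `(ℕ ∪ {∞})^ℕ` is
bounded. -/
theorem continuous_EF_image_bounded
    {X : Type*} [TopologicalSpace X]
    (hX : ∀ Φ : X → ℕ → ℕ, Continuous Φ →
      ∃ g : ℕ → ℕ, ∀ x : X, ∀ᶠ n in atTop, Φ x n ≤ g n)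
    (hGδ : ∀ G : Set X, IsGδ G → ∀ Φ : G → ℕ → ℕ, Continuous Φ →
      ∃ g : ℕ → ℕ, ∀ y : G, ∀ᶠ n in atTop, Φ y n ≤ g n)
    (Ψ : X → ℕ → OnePoint ℕ) (hΨ : Continuous Ψ)
    (hEF : ∀ x : X, ∀ᶠ n in atTop, Ψ x n ≠ ∞) :
    ∃ g : ℕ → ℕ, ∀ x : X, EFLeStar (Ψ x) g :=
  continuous_EF_image_bounded_general hGδ Ψ hΨ hEF
end

section
/- Let X be a topological space and suppose that every Borel image of X in ℕ^ℕ is ≤*-bounded. Then X is a QN space: whenever continuous functions f_n : X → ℝ converge pointwise to 0, there exist positive reals ε_n → 0 such that for each x ∈ X, |f_n(x)| < ε_n for all but finitely many n. -/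
open Filter Topology

/-!
Let `Ψ x n` be the first index from which `|f m x| < 1/(n+1)`. Since the `f m` are continuous,
`Ψ` is Borel, so some `g` eventually dominates every `Ψ x`. Let `ι` grow so slowly that
`g (ι m) ≤ m`; then `ε m = 1/(ι m + 1)` tends to `0`, and for every `x` and large `m` we get
`Ψ x (ι m) ≤ g (ι m) ≤ m`, i.e. `|f m x| < ε m`.
-/

section ConvergenceModulus

variable {X : Type*} {f : ℕ → X → ℝ} {x : X}

/-- Junk value `0` when the set is empty, i.e. when `f · x` does not tend to `0`. -/
noncomputable def convergenceModulus (f : ℕ → X → ℝ) (x : X) (n : ℕ) : ℕ :=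
  sInf {k | ∀ m ≥ k, |f m x| < 1 / ((n : ℝ) + 1)}

lemma exists_forall_ge_abs_lt_one_div (hx : Tendsto (f · x) atTop (𝓝 0)) (n : ℕ) :
    ∃ k, ∀ m ≥ k, |f m x| < 1 / ((n : ℝ) + 1) := by
  have hpos : (0 : ℝ) < 1 / ((n : ℝ) + 1) := by positivity
  simpa using eventually_atTop.1 (hx.eventually (eventually_abs_sub_lt 0 hpos))

open Classical in
lemma convergenceModulus_eq_find (hx : Tendsto (f · x) atTop (𝓝 0)) (n : ℕ) :
    convergenceModulus f x n = Nat.find (exists_forall_ge_abs_lt_one_div hx n) :=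
  Nat.sInf_def _

lemma abs_lt_of_convergenceModulus_le (hx : Tendsto (f · x) atTop (𝓝 0)) {n m : ℕ}
    (h : convergenceModulus f x n ≤ m) : |f m x| < 1 / ((n : ℝ) + 1) :=
  Nat.sInf_mem (exists_forall_ge_abs_lt_one_div hx n) m h

lemma measurable_convergenceModulus [MeasurableSpace X] (hf : ∀ m, Measurable (f m))
    (hlim : ∀ x, Tendsto (f · x) atTop (𝓝 0)) : Measurable (convergenceModulus f) := by
  classical
  refine measurable_pi_lambda _ fun n => ?_
  simp_rw [convergenceModulus_eq_find (hlim _) n]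
  refine measurable_find _ fun k => ?_
  simp only [Set.ofPred_forall]
  exact MeasurableSet.iInter fun m => MeasurableSet.iInter fun _ =>
    measurableSet_lt (hf m).abs measurable_const

end ConvergenceModulus

def slowInverse (g : ℕ → ℕ) (m : ℕ) : ℕ :=
  Nat.findGreatest (fun n => ∀ k ≤ n, g k ≤ m) m

lemma tendsto_slowInverse_atTop (g : ℕ → ℕ) : Tendsto (slowInverse g) atTop atTop := by
  refine tendsto_atTop.2 fun n => ?_
  have hg : ∀ᶠ m in atTop, ∀ k ∈ Set.Iic n, g k ≤ m :=
    (Set.finite_Iic n).eventually_all.2 fun k _ => eventually_ge_atTop (g k)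
  filter_upwards [eventually_ge_atTop n, hg] with m hnm hgm
  exact Nat.le_findGreatest hnm hgm

lemma eventually_apply_slowInverse_le (g : ℕ → ℕ) :
    ∀ᶠ m in atTop, g (slowInverse g m) ≤ m := by
  filter_upwards [eventually_ge_atTop (g 0)] with m hm
  have h0 : ∀ k ≤ 0, g k ≤ m := fun k hk => by rwa [Nat.le_zero.1 hk]
  exact Nat.findGreatest_spec (P := fun n => ∀ k ≤ n, g k ≤ m) (Nat.zero_le m) h0 _ le_rfl

/-- If every Borel image of `X` in `ℕ^ℕ` is `≤*`-bounded, then `X` is a QN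
space: every sequence of continuous real-valued functions on `X` converging
pointwise to `0` converges quasi-normally to `0`. -/
theorem QN_of_bounded_Borel_images
    {X : Type*} [TopologicalSpace X] [MeasurableSpace X] [BorelSpace X]
    (hX : ∀ Ψ : X → ℕ → ℕ, Measurable Ψ →
      ∃ g : ℕ → ℕ, ∀ x : X, ∀ᶠ n in atTop, Ψ x n ≤ g n)
    (f : ℕ → X → ℝ) (hf : ∀ n, Continuous (f n))
    (hlim : ∀ x : X, Tendsto (fun n => f n x) atTop (nhds 0)) :
    ∃ ε : ℕ → ℝ, (∀ n, 0 < ε n) ∧ Tendsto ε atTop (nhds 0) ∧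
      ∀ x : X, ∀ᶠ n in atTop, |f n x| < ε n := by
  obtain ⟨g, hg⟩ :=
    hX _ (measurable_convergenceModulus (fun n => (hf n).measurable) hlim)
  refine ⟨fun m => 1 / ((slowInverse g m : ℝ) + 1), fun m => by positivity,
    tendsto_one_div_add_atTop_nhds_zero_nat.comp (tendsto_slowInverse_atTop g), fun x => ?_⟩
  filter_upwards [(tendsto_slowInverse_atTop g).eventually (hg x),
    eventually_apply_slowInverse_le g] with m hΨ hgm
  exact abs_lt_of_convergenceModulus_le (hlim x) (hΨ.trans hgm)
end

section
/- Let X be a QN space (every sequence of continuous real-valued functions on X converging pointwise to 0 converges quasi-normally to 0). Then every continuous image Y of X in the space EF of eventually finite elements of (ℕ ∪ {∞})^ℕ is bounded. (Proof via: for y ∈ Y define f_n(y) = 1/min(y⁻¹(n)) with conventions min ∅ = ∞, 1/∞ = 0; then f_n → 0 pointwise on Y.) -/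
/-!
In place of the paper's `f_m(y) = 1 / min y⁻¹(m)` we use `hitWeight y m = ∑_{k ∈ y⁻¹(m)} 2⁻ᵏ`.
It is continuous in `y` (each `m` is isolated in `ℕ ∪ {∞}` and the series converges uniformly),
tends to `0` as `m → ∞` (each `y k` is hit by at most one `m`), and `y n = m` forces
`2⁻ⁿ ≤ hitWeight y m`. The QN property gives witnesses `ε_m → 0` with `hitWeight (Ψ x) m < ε_m`
for large `m`; choosing `M n` with `ε_m < 2⁻ⁿ` for `m ≥ M n`, a value `Ψ x n = m > max n (M n)`
is impossible for large `n`.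
-/

open OnePoint Filter

open Topology

theorem OnePoint.continuous_indicator_singleton_coe {X Y : Type*} [TopologicalSpace X]
    [DiscreteTopology X] [TopologicalSpace Y] [Zero Y] (x : X) (c : Y) :
    Continuous (({(x : OnePoint X)} : Set (OnePoint X)).indicator fun _ => c) := by
  rw [continuous_iff_from_discrete]
  refine tendsto_const_nhds.congr' <| (eventually_cofinite_ne x).mono fun j hj => ?_
  simp [hj]

noncomputable def hitTerm (y : ℕ → OnePoint ℕ) (m k : ℕ) : ℝ :=
  ({(m : OnePoint ℕ)} : Set (OnePoint ℕ)).indicator (fun _ => ((1 : ℝ) / 2) ^ k) (y k)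

noncomputable def hitWeight (y : ℕ → OnePoint ℕ) (m : ℕ) : ℝ :=
  ∑' k, hitTerm y m k

lemma hitTerm_nonneg (y : ℕ → OnePoint ℕ) (m k : ℕ) : 0 ≤ hitTerm y m k :=
  Set.indicator_nonneg (fun _ _ => by positivity) _

lemma norm_hitTerm_le (y : ℕ → OnePoint ℕ) (m k : ℕ) : ‖hitTerm y m k‖ ≤ ((1 : ℝ) / 2) ^ k := by
  rw [Real.norm_of_nonneg (hitTerm_nonneg y m k)]
  exact Set.indicator_le_self' (fun _ _ => by positivity) _

lemma continuous_hitWeight (m : ℕ) : Continuous fun y : ℕ → OnePoint ℕ => hitWeight y m :=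
  continuous_tsum (fun k => (continuous_indicator_singleton_coe _ _).comp (continuous_apply k))
    summable_geometric_two fun k y => norm_hitTerm_le y m k

lemma OnePoint.eventually_ne_coe_atTop (z : OnePoint ℕ) : ∀ᶠ m : ℕ in atTop, z ≠ m := by
  induction z using OnePoint.rec with
  | infty => exact .of_forall fun m => infty_ne_coe m
  | coe j => exact (eventually_ne_atTop j).mono fun m hm => by simpa [eq_comm] using hm

lemma tendsto_hitTerm_atTop (y : ℕ → OnePoint ℕ) (k : ℕ) :
    Tendsto (fun m => hitTerm y m k) atTop (𝓝 0) :=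
  tendsto_const_nhds.congr' <| (eventually_ne_coe_atTop (y k)).mono fun m hm => by
    simp [hitTerm, hm]

lemma tendsto_hitWeight_atTop (y : ℕ → OnePoint ℕ) : Tendsto (hitWeight y) atTop (𝓝 0) := by
  have h := tendsto_tsum_of_dominated_convergence summable_geometric_two (tendsto_hitTerm_atTop y)
    (.of_forall fun m => norm_hitTerm_le y m)
  rwa [tsum_zero] at h

lemma pow_le_hitWeight {y : ℕ → OnePoint ℕ} {n m : ℕ} (h : y n = m) :
    ((1 : ℝ) / 2) ^ n ≤ hitWeight y m := by
  have hsum := summable_geometric_two.of_norm_bounded (norm_hitTerm_le y m)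
  calc ((1 : ℝ) / 2) ^ n = hitTerm y m n := by simp [hitTerm, h]
    _ ≤ hitWeight y m := hsum.le_tsum n fun k _ => hitTerm_nonneg y m k

theorem QN_implies_bounded_EF_images_general
    {X : Type*} [TopologicalSpace X]
    (hQN : ∀ f : ℕ → X → ℝ, (∀ n, Continuous (f n)) →
      (∀ x : X, Tendsto (fun n => f n x) atTop (nhds 0)) →
      ∃ ε : ℕ → ℝ, (∀ n, 0 < ε n) ∧ Tendsto ε atTop (nhds 0) ∧
        ∀ x : X, ∀ᶠ n in atTop, |f n x| < ε n)
    (Ψ : X → ℕ → OnePoint ℕ) (hΨ : Continuous Ψ) :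
    ∃ g : ℕ → ℕ, ∀ x : X, EFLeStar (Ψ x) g := by
  obtain ⟨ε, -, hε, hεf⟩ := hQN (fun m x => hitWeight (Ψ x) m)
    (fun m => (continuous_hitWeight m).comp hΨ) (fun x => tendsto_hitWeight_atTop (Ψ x))
  choose M hM using fun n : ℕ =>
    eventually_atTop.1 (hε.eventually (gt_mem_nhds (by positivity : (0 : ℝ) < (1 / 2) ^ n)))
  refine ⟨fun n => max n (M n), fun x => ?_⟩
  obtain ⟨N, hN⟩ := eventually_atTop.1 (hεf x)
  filter_upwards [eventually_ge_atTop N] with n hn m hm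
  by_contra! hlt
  have hweight := pow_le_hitWeight hm
  have hsmall := (le_abs_self _).trans_lt (hN m (by omega))
  have hε_lt := hM n m (by omega)
  linarith

/-- If `X` is a QN space (every pointwise convergent-to-`0` sequence of
continuous real-valued functions on `X` converges quasi-normally to `0`),
then every continuous image of `X` in the space `EF` of eventually finite
elements of `(ℕ ∪ {∞})^ℕ` is bounded. -/
theorem QN_implies_bounded_EF_images
    {X : Type*} [TopologicalSpace X]
    (hQN : ∀ f : ℕ → X → ℝ, (∀ n, Continuous (f n)) →
      (∀ x : X, Tendsto (fun n => f n x) atTop (nhds 0)) →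
      ∃ ε : ℕ → ℝ, (∀ n, 0 < ε n) ∧ Tendsto ε atTop (nhds 0) ∧
        ∀ x : X, ∀ᶠ n in atTop, |f n x| < ε n)
    (Ψ : X → ℕ → OnePoint ℕ) (hΨ : Continuous Ψ)
    (hEF : ∀ x : X, ∀ᶠ n in atTop, Ψ x n ≠ ∞) :
    ∃ g : ℕ → ℕ, ∀ x : X, EFLeStar (Ψ x) g :=
  QN_implies_bounded_EF_images_general hQN Ψ hΨ
end

section
/- For Y ⊆ EF and g ∈ ℕ^ℕ increasing, suppose: g(1) = k, and for each n, whenever m ≥ g(n) we have ε_m < 1/n, where (ε_m) are positive reals, and every y ∈ Y satisfies: for all n ≥ k with y(n) < ∞, 1/min(y⁻¹(y(n))) < ε_{y(n)} whenever y(n) > k. Then every y ∈ Y is bounded by g, i.e., for all n with y(n) < ∞, y(n) ≤ g(n). -/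
open OnePoint Filter

lemma sInf_fiber_mem_Icc {α : Type*} (y : ℕ → α) {n : ℕ} (hn : 1 ≤ n) :
    sInf {m : ℕ | 1 ≤ m ∧ y m = y n} ∈ Set.Icc 1 n :=
  have hmem : n ∈ {m : ℕ | 1 ≤ m ∧ y m = y n} := ⟨hn, rfl⟩
  ⟨(Nat.sInf_mem ⟨n, hmem⟩).1, Nat.sInf_le hmem⟩

lemma lt_of_one_div_lt {g : ℕ → ℕ} {ε : ℕ → ℝ}
    (hε : ∀ n : ℕ, 1 ≤ n → ∀ m : ℕ, g n ≤ m → ε m < 1 / (n : ℝ))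
    {m j : ℕ} (hm : 1 ≤ m) (h : 1 / (m : ℝ) < ε j) : j < g m :=
  not_le.1 fun hj => (h.trans (hε m hm j hj)).false

theorem EF_bounded_by_g_general
    (Y : Set (ℕ → OnePoint ℕ))
    (g : ℕ → ℕ) (hg : Monotone g) (k : ℕ) (hgk : g 1 = k)
    (ε : ℕ → ℝ)
    (hε : ∀ n : ℕ, 1 ≤ n → ∀ m : ℕ, g n ≤ m → ε m < 1 / (n : ℝ))
    (hY : ∀ y ∈ Y, ∀ n : ℕ, 1 ≤ n → ∀ j : ℕ, y n = (j : OnePoint ℕ) →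
      k < j → (1 : ℝ) / ((sInf {m : ℕ | 1 ≤ m ∧ y m = y n} : ℕ) : ℝ) < ε j) :
    ∀ y ∈ Y, ∀ n : ℕ, 1 ≤ n → ∀ j : ℕ, y n = (j : OnePoint ℕ) → j ≤ g n := by
  intro y hy n hn j hj
  rcases le_or_gt j k with hjk | hkj
  · exact hjk.trans (hgk ▸ hg hn)
  · obtain ⟨hm₀, hm₀n⟩ := sInf_fiber_mem_Icc y hn
    exact ((lt_of_one_div_lt hε hm₀ (hY y hy n hn j hj hkj)).trans_le (hg hm₀n)).le

/-- A combinatorial boundedness lemma in `EF` (indices run over `n ≥ 1`, as in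
the classical setting). Suppose `g` is increasing with `g 1 = k`, the
positive reals `ε m` satisfy `ε m < 1/n` whenever `m ≥ g n` (`n ≥ 1`), and
every `y ∈ Y ⊆ EF` satisfies: whenever `y n` takes a finite value `j > k`,
`1 / min y⁻¹(j) < ε j`. Then every `y ∈ Y` is bounded by `g`: for all
`n ≥ 1` with `y n` finite, `y n ≤ g n`. -/
theorem EF_bounded_by_g
    (Y : Set (ℕ → OnePoint ℕ))
    (hEF : ∀ y ∈ Y, ∀ᶠ n in atTop, y n ≠ ∞)
    (g : ℕ → ℕ) (hg : Monotone g) (k : ℕ) (hgk : g 1 = k)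
    (ε : ℕ → ℝ) (hεpos : ∀ m, 0 < ε m)
    (hε : ∀ n : ℕ, 1 ≤ n → ∀ m : ℕ, g n ≤ m → ε m < 1 / (n : ℝ))
    (hY : ∀ y ∈ Y, ∀ n : ℕ, 1 ≤ n → ∀ j : ℕ, y n = (j : OnePoint ℕ) →
      k < j → (1 : ℝ) / ((sInf {m : ℕ | 1 ≤ m ∧ y m = y n} : ℕ) : ℝ) < ε j) :
    ∀ y ∈ Y, ∀ n : ℕ, 1 ≤ n → ∀ j : ℕ, y n = (j : OnePoint ℕ) → j ≤ g n :=
  EF_bounded_by_g_general Y g hg k hgk ε hε hY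
end

section
/- Suppose X is a topological space such that for every sequence of countable Borel covers (𝒰_n) of X, one can select elements U_n ∈ 𝒰_n forming a point-cofinite cover whenever each 𝒰_n is a Borel point-cofinite cover (i.e., X satisfies S₁(Borel-Γ, Borel-Γ)). Then every Borel image of X in ℕ^ℕ is ≤*-bounded. -/
open Filter

theorem bounded_Borel_images_of_S1BorelGamma_general
    {X : Type*} [MeasurableSpace X]
    (hS1 : ∀ 𝒰 : ℕ → ℕ → Set X,
      (∀ n m, MeasurableSet (𝒰 n m)) →
      (∀ n, ∀ x : X, ∀ᶠ m in atTop, x ∈ 𝒰 n m) →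
      ∃ sel : ℕ → ℕ, ∀ x : X, ∀ᶠ n in atTop, x ∈ 𝒰 n (sel n))
    (Ψ : X → ℕ → ℕ) (hΨ : Measurable Ψ) :
    ∃ g : ℕ → ℕ, ∀ x : X, ∀ᶠ n in atTop, Ψ x n ≤ g n :=
  hS1 (fun n m => {x | Ψ x n ≤ m})
    (fun n _ => measurableSet_le ((measurable_pi_apply n).comp hΨ) measurable_const)
    (fun n x => eventually_ge_atTop (Ψ x n))

/-- If `X` satisfies `S₁(Borel-Γ, Borel-Γ)` — from every sequence of Borel
point-cofinite covers of `X` one can select single elements forming a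
point-cofinite cover — then every Borel image of `X` in `ℕ^ℕ` is
`≤*`-bounded. -/
theorem bounded_Borel_images_of_S1BorelGamma
    {X : Type*} [TopologicalSpace X] [MeasurableSpace X] [BorelSpace X]
    (hS1 : ∀ 𝒰 : ℕ → ℕ → Set X,
      (∀ n m, MeasurableSet (𝒰 n m)) →
      (∀ n, ∀ x : X, ∀ᶠ m in atTop, x ∈ 𝒰 n m) →
      ∃ sel : ℕ → ℕ, ∀ x : X, ∀ᶠ n in atTop, x ∈ 𝒰 n (sel n))
    (Ψ : X → ℕ → ℕ) (hΨ : Measurable Ψ) :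
    ∃ g : ℕ → ℕ, ∀ x : X, ∀ᶠ n in atTop, Ψ x n ≤ g n :=
  bounded_Borel_images_of_S1BorelGamma_general hS1 Ψ hΨ
end

section
/- Let X be a topological space with the property that every G_δ subset of X has the Hurewicz property U_fin(O, Γ). Then X has the Hurewicz property hereditarily: every subspace Y ⊆ X has U_fin(O, Γ). -/
/-!
Open sets of a subspace `Y ⊆ X` are traces `Y ∩ V` of open sets `V` of `X`. If the traces of
`V n m` cover `Y` for every `n`, then `Y` lies in the `G_δ` set `G = ⋂ n, ⋃ m, V n m`, whose
traces on `G` are open covers of `G`. A finite subfamily covering `G` would cover `Y`, so the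
Hurewicz property of `G` applies, and its point-cofinite selection restricts to `Y`.
-/

open Filter

/-- The Hurewicz property `U_fin(O, Γ)`: for every sequence of countable open
covers, none containing a finite subcover, there are finite subfamilies whose
unions form a point-cofinite cover. -/
def Hurewicz (Z : Type*) [TopologicalSpace Z] : Prop :=
  ∀ 𝒰 : ℕ → ℕ → Set Z,
    (∀ n m, IsOpen (𝒰 n m)) →
    (∀ n, (⋃ m, 𝒰 n m) = Set.univ) →
    (∀ n, ¬ ∃ F : Finset ℕ, (⋃ m ∈ F, 𝒰 n m) = Set.univ) →
    ∃ F : ℕ → Finset ℕ, ∀ z : Z, ∀ᶠ n in atTop, z ∈ ⋃ m ∈ F n, 𝒰 n m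

open Set

theorem iUnion_preimage_val_eq_univ_iff {X ι : Type*} {s : Set X} {V : ι → Set X} :
    ⋃ i, ((↑) : s → X) ⁻¹' V i = univ ↔ s ⊆ ⋃ i, V i := by
  rw [← preimage_iUnion, preimage_eq_univ_iff, Subtype.range_coe]

theorem Hurewicz.exists_preimage_selection {Y Z : Type*} [TopologicalSpace Z]
    (hZ : Hurewicz Z) (f : Y → Z) (W : ℕ → ℕ → Set Z) (hW : ∀ n m, IsOpen (W n m))
    (hcov : ∀ n, ⋃ m, W n m = univ)
    (hnofin : ∀ n, ¬ ∃ F : Finset ℕ, ⋃ m ∈ F, f ⁻¹' W n m = univ) :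
    ∃ F : ℕ → Finset ℕ, ∀ y, ∀ᶠ n in atTop, y ∈ ⋃ m ∈ F n, f ⁻¹' W n m := by
  have hnofinZ : ∀ n, ¬ ∃ F : Finset ℕ, ⋃ m ∈ F, W n m = univ := by
    rintro n ⟨F, hF⟩
    exact hnofin n ⟨F, by simp only [← preimage_iUnion₂, hF, preimage_univ]⟩
  obtain ⟨F, hF⟩ := hZ W hW hcov hnofinZ
  exact ⟨F, fun y => by simpa only [← preimage_iUnion₂, mem_preimage] using hF (f y)⟩

/-- If every `G_δ` subspace of `X` has the Hurewicz property `U_fin(O, Γ)`,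
then every subspace of `X` has it, i.e. `X` is hereditarily Hurewicz. -/
theorem hereditarily_Hurewicz_of_Gdelta_Hurewicz
    {X : Type*} [TopologicalSpace X]
    (hGδ : ∀ G : Set X, IsGδ G → Hurewicz G) :
    ∀ Y : Set X, Hurewicz Y := by
  intro Y 𝒰 hopen hcov hnofin
  choose V hVopen hV using fun n m => isOpen_induced_iff.mp (hopen n m)
  obtain rfl : 𝒰 = fun n m => ((↑) : Y → X) ⁻¹' V n m := funext₂ fun n m => (hV n m).symm
  set G := ⋂ n, ⋃ m, V n m
  have hYG : Y ⊆ G := subset_iInter fun n => iUnion_preimage_val_eq_univ_iff.mp (hcov n)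
  have hG : IsGδ G := .iInter_of_isOpen fun n => isOpen_iUnion (hVopen n)
  have hGcov : ∀ n, ⋃ m, ((↑) : G → X) ⁻¹' V n m = univ := fun n =>
    iUnion_preimage_val_eq_univ_iff.mpr (iInter_subset _ n)
  exact (hGδ G hG).exists_preimage_selection (inclusion hYG) _
    (fun n m => (hVopen n m).preimage continuous_subtype_val) hGcov hnofin
end

section
/- Let X ⊆ ℝ. Then X is a σ' space (for each F_σ set E ⊆ ℝ there is an F_σ set F ⊆ ℝ with E ∩ F = ∅ and X ⊆ E ∪ F) if and only if: X satisfies the property that for each G_δ set G ⊆ ℝ containing any subspace Y ⊆ X, there is an F_σ set F with Y ⊆ F ⊆ G. (Equivalently, given the Hurewicz characterization, X is σ' iff X is hereditarily Hurewicz.) -/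
/-!
Complementation exchanges `F_σ` and `G_δ` sets, and for an `F_σ` set `E` the `σ'` condition says
exactly that some `F_σ` set lies between `X \ E` and the `G_δ` set `Eᶜ`. Given `Y ⊆ X` and a `G_δ`
set `G ⊇ Y`, apply this to `E = Gᶜ`, for which `Y ⊆ X \ E`.
-/

/-- `F` is an `F_σ` subset of `ℝ`: a countable union of closed sets. -/
def IsFSigma (F : Set ℝ) : Prop :=
  ∃ C : ℕ → Set ℝ, (∀ n, IsClosed (C n)) ∧ F = ⋃ n, C n

open Set

lemma isFSigma_iff_isGδ_compl {E : Set ℝ} : IsFSigma E ↔ IsGδ Eᶜ := by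
  rw [isGδ_iff_eq_iInter_nat]
  constructor
  · rintro ⟨C, hC, rfl⟩
    exact ⟨fun n => (C n)ᶜ, fun n => (hC n).isOpen_compl, compl_iUnion C⟩
  · rintro ⟨U, hU, hEU⟩
    refine ⟨fun n => (U n)ᶜ, fun n => (hU n).isClosed_compl, ?_⟩
    rw [← compl_iInter, ← hEU, compl_compl]

lemma exists_disjoint_cover_iff_exists_between {α : Type*} (P : Set α → Prop) (X E : Set α) :
    (∃ F, P F ∧ E ∩ F = ∅ ∧ X ⊆ E ∪ F) ↔ ∃ F, P F ∧ X \ E ⊆ F ∧ F ⊆ Eᶜ := by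
  refine exists_congr fun F => and_congr_right fun _ => ?_
  rw [← disjoint_iff_inter_eq_empty, ← subset_compl_iff_disjoint_left, sdiff_subset_iff,
    and_comm]

/-- `X ⊆ ℝ` is a `σ'` space (for each `F_σ` set `E` there is an `F_σ` set `F`
disjoint from `E` with `X ⊆ E ∪ F`) if and only if every subspace `Y ⊆ X`
has the interpolation property: for every `G_δ` set `G ⊇ Y` there is an
`F_σ` set `F` with `Y ⊆ F ⊆ G`. -/
theorem sigma'_iff_hereditary_interpolation (X : Set ℝ) :
    (∀ E : Set ℝ, IsFSigma E →
      ∃ F : Set ℝ, IsFSigma F ∧ E ∩ F = ∅ ∧ X ⊆ E ∪ F)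
    ↔
    (∀ Y : Set ℝ, Y ⊆ X → ∀ G : Set ℝ, IsGδ G → Y ⊆ G →
      ∃ F : Set ℝ, IsFSigma F ∧ Y ⊆ F ∧ F ⊆ G) := by
  simp only [exists_disjoint_cover_iff_exists_between]
  constructor
  · intro hσ Y hYX G hG hYG
    obtain ⟨F, hF, hXF, hFG⟩ :=
      hσ Gᶜ (isFSigma_iff_isGδ_compl.2 (by rwa [compl_compl]))
    rw [compl_compl] at hFG
    exact ⟨F, hF, fun y hy => hXF ⟨hYX hy, not_not_intro (hYG hy)⟩, hFG⟩
  · intro hinterp E hE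
    exact hinterp (X \ E) sdiff_subset Eᶜ (isFSigma_iff_isGδ_compl.1 hE) fun _ hx => hx.2
end
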